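/- arXiv:2404.08015 — 3 statements merged into one kernel-verified Lean document; each statement's English description precedes it below -/
import Mathlib

section
/- Let s = (s₁, s₂, s₃, s₄) be a 4-tuple of positive integers, and let a₁, a₂, a₃, a₄ be pairwise coprime positive integers with aᵢ > sᵢ for each i. Define q₁ = a₂a₃a₄, q₂ = a₁a₃a₄, q₃ = a₁a₂a₄, q₄ = a₁a₂a₃. Then for any 4-tuple t of positive integers with q · t = q · s, we have t = s. -/
/-!
Write `q i = ∏_{j ≠ i} a j`. Every term of `q · t` other than `q i * t i` is divisible by `a i`,
while `q i` is a unit modulo `a i`; hence `q · t = q · s` forces `t i ≡ s i [MOD a i]`. As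
`s i < a i`, `s i` is the least natural number in its residue class, so `s i ≤ t i` for all `i`,
and equality of the positive linear forms then gives `t = s`.
-/

def dot (q s : Fin 4 → ℕ) : ℕ := ∑ i, q i * s i

open Finset

theorem Nat.ModEq.le_of_lt {a s t : ℕ} (h : t ≡ s [MOD a]) (hs : s < a) : s ≤ t :=
  calc s = s % a := (Nat.mod_eq_of_lt hs).symm
    _ = t % a := h.symm
    _ ≤ t := Nat.mod_le t a

section WeightedSum

variable {ι : Type*} [Fintype ι]

theorem modEq_of_sum_mul_eq [DecidableEq ι] {a : ℕ} {q s t : ι → ℕ} {i : ι}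
    (hdvd : ∀ j ≠ i, a ∣ q j) (hcop : Nat.Coprime a (q i))
    (h : ∑ j, q j * t j = ∑ j, q j * s j) : t i ≡ s i [MOD a] := by
  have hrest : ∀ u : ι → ℕ, ∑ j ∈ univ.erase i, q j * u j ≡ 0 [MOD a] := fun u =>
    Nat.modEq_zero_iff_dvd.mpr (dvd_sum fun j hj => (hdvd j (ne_of_mem_erase hj)).mul_right _)
  have hmul : q i * t i ≡ q i * s i [MOD a] := by
    have hsum : q i * t i + ∑ j ∈ univ.erase i, q j * t j
        = q i * s i + ∑ j ∈ univ.erase i, q j * s j := by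
      rwa [add_sum_erase univ (fun j => q j * t j) (mem_univ i),
        add_sum_erase univ (fun j => q j * s j) (mem_univ i)]
    exact Nat.ModEq.add_right_cancel ((hrest t).trans (hrest s).symm) (congrArg (· % a) hsum)
  exact Nat.ModEq.cancel_left_of_coprime hcop hmul

theorem eq_of_sum_mul_eq_of_le {q s t : ι → ℕ} (hq : ∀ i, 0 < q i) (hle : ∀ i, s i ≤ t i)
    (h : ∑ i, q i * t i = ∑ i, q i * s i) : t = s := by
  have hterm := (sum_eq_sum_iff_of_le fun i _ => Nat.mul_le_mul_left (q i) (hle i)).mp h.symm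
  funext i
  exact (Nat.eq_of_mul_eq_mul_left (hq i) (hterm i (mem_univ i))).symm

theorem eq_of_sum_prod_erase_mul_eq [DecidableEq ι] {a s t : ι → ℕ}
    (hcop : Pairwise fun i j => Nat.Coprime (a i) (a j))
    (hlt : ∀ i, s i < a i)
    (h : ∑ i, (∏ j ∈ univ.erase i, a j) * t i = ∑ i, (∏ j ∈ univ.erase i, a j) * s i) :
    t = s := by
  have hcongr : ∀ i, t i ≡ s i [MOD a i] := fun i =>
    modEq_of_sum_mul_eq (fun j hji => dvd_prod_of_mem a (mem_erase.mpr ⟨hji.symm, mem_univ i⟩))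
      (Nat.Coprime.prod_right fun j hj => hcop (ne_of_mem_erase hj).symm) h
  have hpos : ∀ i, 0 < ∏ j ∈ univ.erase i, a j := fun i =>
    prod_pos fun j _ => Nat.zero_lt_of_lt (hlt j)
  exact eq_of_sum_mul_eq_of_le hpos (fun i => (hcongr i).le_of_lt (hlt i)) h

end WeightedSum

theorem coprime_question_decodes_general (s a : Fin 4 → ℕ)
    (hcop : ∀ i j, i ≠ j → Nat.Coprime (a i) (a j))
    (hgt : ∀ i, s i < a i)
    (q : Fin 4 → ℕ)
    (hq0 : q 0 = a 1 * a 2 * a 3) (hq1 : q 1 = a 0 * a 2 * a 3)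
    (hq2 : q 2 = a 0 * a 1 * a 3) (hq3 : q 3 = a 0 * a 1 * a 2)
    (t : Fin 4 → ℕ)
    (heq : dot q t = dot q s) : t = s := by
  have hq : q = fun i => ∏ j ∈ univ.erase i, a j := by
    funext i
    fin_cases i <;>
      simp [← filter_ne', prod_filter, Fin.prod_univ_four, hq0, hq1, hq2, hq3]
  subst hq
  exact eq_of_sum_prod_erase_mul_eq hcop hgt heq

theorem coprime_question_decodes (s a : Fin 4 → ℕ)
    (hs : ∀ i, 0 < s i) (ha : ∀ i, 0 < a i)
    (hcop : ∀ i j, i ≠ j → Nat.Coprime (a i) (a j))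
    (hgt : ∀ i, s i < a i)
    (q : Fin 4 → ℕ)
    (hq0 : q 0 = a 1 * a 2 * a 3) (hq1 : q 1 = a 0 * a 2 * a 3)
    (hq2 : q 2 = a 0 * a 1 * a 3) (hq3 : q 3 = a 0 * a 1 * a 2)
    (t : Fin 4 → ℕ) (ht : ∀ i, 0 < t i)
    (heq : dot q t = dot q s) : t = s :=
  coprime_question_decodes_general s a hcop hgt q hq0 hq1 hq2 hq3 t heq
end

section
/- For every 4-tuple q of positive integers and every 4-tuple s of positive integers, there exists a second question q' (a 4-tuple of positive integers, which may depend on q and on the answer q · s) such that for all 4-tuples t of positive integers, if q · t = q · s and q' · t = q' · s then t = s. That is, any first question together with a carefully chosen follow-up question suffices to determine any secret. -/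
lemma dot_pow_eq_ofDigits (B : ℕ) (u : Fin 4 → ℕ) :
    dot (fun i => B ^ (i : ℕ)) u = Nat.ofDigits B (List.ofFn u) := by
  simp [dot, Fin.sum_univ_four, List.ofFn_succ, Nat.ofDigits_cons]
  ring

lemma eq_of_dot_pow_eq {B : ℕ} (hB : 1 < B) {t s : Fin 4 → ℕ} (ht : ∀ i, t i < B)
    (hs : ∀ i, s i < B) (h : dot (fun i => B ^ (i : ℕ)) t = dot (fun i => B ^ (i : ℕ)) s) :
    t = s := by
  rw [dot_pow_eq_ofDigits, dot_pow_eq_ofDigits] at h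
  refine List.ofFn_injective (Nat.ofDigits_inj_of_len_eq hB (by simp) ?_ ?_ h)
  · simpa only [List.forall_mem_ofFn_iff] using ht
  · simpa only [List.forall_mem_ofFn_iff] using hs

lemma le_dot_of_pos {q : Fin 4 → ℕ} {i : Fin 4} (hq : 0 < q i) (t : Fin 4 → ℕ) :
    t i ≤ dot q t :=
  calc t i ≤ q i * t i := Nat.le_mul_of_pos_left _ hq
    _ ≤ dot q t := Finset.single_le_sum (f := fun j => q j * t j)
        (fun _ _ => Nat.zero_le _) (Finset.mem_univ i)

theorem followup_question_suffices
    (q s : Fin 4 → ℕ) (hq : ∀ i, 0 < q i) (hs : ∀ i, 0 < s i) :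
    ∃ q' : Fin 4 → ℕ, (∀ i, 0 < q' i) ∧
      ∀ t : Fin 4 → ℕ, (∀ i, 0 < t i) →
        dot q t = dot q s → dot q' t = dot q' s → t = s := by
  set B := dot q s + 1
  have hB : 1 < B := by have := le_dot_of_pos (hq 0) s; have := hs 0; omega
  refine ⟨fun i => B ^ (i : ℕ), fun i => Nat.pow_pos (by omega), fun t _ hqt hq't => ?_⟩
  have digit_lt : ∀ u : Fin 4 → ℕ, dot q u = dot q s → ∀ i, u i < B := fun u hu i => by
    have := le_dot_of_pos (hq i) u; omega
  exact eq_of_dot_pow_eq hB (digit_lt t hqt) (digit_lt s rfl) hq't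
end

section
/- For any n ≥ 1 and any n-tuple s of positive integers, there exists an n-tuple q of positive integers such that every n-tuple t of positive integers with q · t = q · s equals s. -/
/-!
Choose pairwise coprime `aᵢ > sᵢ` and put `qᵢ = ∏_{j ≠ i} aⱼ`. Modulo `aᵢ` every term of
`q · t` except `qᵢ tᵢ` vanishes, and `qᵢ` is a unit, so `q · t = q · s` forces
`tᵢ ≡ sᵢ [MOD aᵢ]`. As `sᵢ < aᵢ` is the least residue of its class, `sᵢ ≤ tᵢ` for every `i`,
and equality of the weighted sums leaves no room for a strict inequality.
-/

open Finset Function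

theorem Nat.lt_fermatNumber (n : ℕ) : n < fermatNumber n :=
  calc n < 2 ^ n := n.lt_two_pow_self
    _ ≤ 2 ^ 2 ^ n := Nat.pow_le_pow_right two_pos n.lt_two_pow_self.le
    _ < fermatNumber n := Nat.lt_succ_self _

theorem Nat.exists_pairwise_coprime_gt {n : ℕ} (s : Fin n → ℕ) :
    ∃ a : Fin n → ℕ, Pairwise (Coprime on a) ∧ ∀ i, s i < a i := by
  refine ⟨fun i ↦ fermatNumber (∑ j, s j + i), fun i j hij ↦ coprime_fermatNumber_fermatNumber ?_,
    fun i ↦ ?_⟩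
  · simpa [Fin.val_inj] using hij
  · calc s i ≤ ∑ j, s j + i :=
          (single_le_sum (fun j _ ↦ zero_le (s j)) (mem_univ i)).trans (Nat.le_add_right _ _)
      _ < _ := lt_fermatNumber _

section Cofactor

variable {ι : Type*} [Fintype ι] [DecidableEq ι]

def cofactor (a : ι → ℕ) (i : ι) : ℕ := ∏ j ∈ univ.erase i, a j

variable {a : ι → ℕ}

theorem cofactor_pos (ha : ∀ i, 0 < a i) (i : ι) : 0 < cofactor a i :=
  prod_pos fun j _ ↦ ha j

theorem dvd_cofactor {i j : ι} (hij : i ≠ j) : a i ∣ cofactor a j :=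
  dvd_prod_of_mem a (mem_erase.2 ⟨hij, mem_univ i⟩)

theorem coprime_cofactor (ha : Pairwise (Nat.Coprime on a)) (i : ι) :
    Nat.Coprime (cofactor a i) (a i) :=
  Nat.Coprime.prod_left fun _ hj ↦ ha (mem_erase.1 hj).1

theorem sum_cofactor_mul_modEq (u : ι → ℕ) (i : ι) :
    ∑ j, cofactor a j * u j ≡ cofactor a i * u i [MOD a i] := by
  have hrest : a i ∣ ∑ j ∈ univ.erase i, cofactor a j * u j :=
    dvd_sum fun j hj ↦ (dvd_cofactor (mem_erase.1 hj).1.symm).mul_right _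
  rw [← add_sum_erase _ _ (mem_univ i)]
  simpa using (Nat.modEq_zero_iff_dvd.2 hrest).add_left (cofactor a i * u i)

theorem eq_of_sum_cofactor_mul_eq (ha : Pairwise (Nat.Coprime on a)) {s t : ι → ℕ}
    (hs : ∀ i, s i < a i) (h : ∑ i, cofactor a i * t i = ∑ i, cofactor a i * s i) : t = s := by
  have hmod (i : ι) : t i ≡ s i [MOD a i] :=
    Nat.ModEq.cancel_left_of_coprime (coprime_cofactor ha i).symm
      ((sum_cofactor_mul_modEq t i).symm.trans (h ▸ sum_cofactor_mul_modEq s i))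
  have hle (i : ι) : s i ≤ t i :=
    calc s i = t i % a i := (Nat.mod_eq_of_lt (hs i)).symm.trans (hmod i).symm
      _ ≤ t i := Nat.mod_le _ _
  have hterm := (sum_eq_sum_iff_of_le fun i _ ↦ Nat.mul_le_mul_left (cofactor a i) (hle i)).1 h.symm
  funext i
  exact (Nat.eq_of_mul_eq_mul_left (cofactor_pos (fun j ↦ (hs j).pos) i)
    (hterm i (mem_univ i))).symm

end Cofactor

theorem no_unbreakable_secret_general_general (n : ℕ)
    (s : Fin n → ℕ) :
    ∃ q : Fin n → ℕ, (∀ i, 0 < q i) ∧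
      ∀ t : Fin n → ℕ, (∀ i, 0 < t i) →
        ∑ i, q i * t i = ∑ i, q i * s i → t = s := by
  obtain ⟨a, ha, hs⟩ := Nat.exists_pairwise_coprime_gt s
  exact ⟨cofactor a, cofactor_pos fun i ↦ (hs i).pos, fun _ _ h ↦ eq_of_sum_cofactor_mul_eq ha hs h⟩

theorem no_unbreakable_secret_general (n : ℕ) (hn : 1 ≤ n)
    (s : Fin n → ℕ) (hs : ∀ i, 0 < s i) :
    ∃ q : Fin n → ℕ, (∀ i, 0 < q i) ∧
      ∀ t : Fin n → ℕ, (∀ i, 0 < t i) →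
        ∑ i, q i * t i = ∑ i, q i * s i → t = s :=
  no_unbreakable_secret_general_general n s
end
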